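/- arXiv:2601.20203 — 4 statements merged into one kernel-verified Lean document; each statement's English description precedes it below -/
import Mathlib

section
/- β(p̂) ≤ 2‖p̂ − p*‖_∞, where β(p̂) = min over feasible flows x of D(p̂, x), D(p, x) = max over simple unblocked paths H w.r.t. x of d_H(p) (or 0 if none exist), and d_H(p) = max{0, p_{s(H)} − p_{t(H)} − Σ_{H^+} a_{ij} + Σ_{H^-} a_{ij}}. -/
open Finset

/-- A path in a directed graph on `Fin n` with edge set `E`: a sequence of
nodes, where each step traverses an edge of `E` either forward (`dir = true`)
or backward (`dir = false`). -/
structure MCFPath (n : ℕ) (E : Finset (Fin n × Fin n)) where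
  len : ℕ
  pos : 0 < len
  node : Fin (len + 1) → Fin n
  dir : Fin len → Bool
  mem : ∀ i : Fin len,
    if dir i then (node i.castSucc, node i.succ) ∈ E
    else (node i.succ, node i.castSucc) ∈ E

namespace MCFPath

variable {n : ℕ} {E : Finset (Fin n × Fin n)}

/-- The underlying edge of `E` traversed at step `i`. -/
def edge (H : MCFPath n E) (i : Fin H.len) : Fin n × Fin n :=
  if H.dir i then (H.node i.castSucc, H.node i.succ)
  else (H.node i.succ, H.node i.castSucc)

/-- The start node of the path. -/
def src (H : MCFPath n E) : Fin n := H.node 0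

/-- The end node of the path. -/
def tgt (H : MCFPath n E) : Fin n := H.node (Fin.last H.len)

/-- A path is simple if it visits each node at most once. -/
def Simple (H : MCFPath n E) : Prop := Function.Injective H.node

/-- A path is unblocked w.r.t. `x` if forward edges are below capacity and
backward edges are above the lower bound. -/
def Unblocked (H : MCFPath n E) (x b c : Fin n × Fin n → ℝ) : Prop :=
  ∀ i : Fin H.len,
    if H.dir i then x (H.edge i) < c (H.edge i) else b (H.edge i) < x (H.edge i)

/-- The reduced cost length
`d_H(p) = max {0, p_{s(H)} − p_{t(H)} − Σ_{H⁺} a + Σ_{H⁻} a}`. -/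
noncomputable def dH (H : MCFPath n E) (a : Fin n × Fin n → ℝ) (p : Fin n → ℝ) : ℝ :=
  max 0 (p H.src - p H.tgt
    - (∑ i, if H.dir i then a (H.edge i) else 0)
    + (∑ i, if H.dir i then 0 else a (H.edge i)))

end MCFPath

/-- `D(p,x)`: the maximum of `d_H(p)` over simple unblocked paths w.r.t. `x`
(or `0` if none exist). -/
noncomputable def Dval (n : ℕ) (E : Finset (Fin n × Fin n)) (a b c : Fin n × Fin n → ℝ)
    (p : Fin n → ℝ) (x : Fin n × Fin n → ℝ) : ℝ :=
  sSup (insert 0 {r : ℝ | ∃ H : MCFPath n E, H.Simple ∧ H.Unblocked x b c ∧ r = H.dH a p})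

/-- A feasible flow: capacity constraints and flow conservation. -/
def FeasibleFlow (n : ℕ) (E : Finset (Fin n × Fin n)) (b c : Fin n × Fin n → ℝ)
    (s : Fin n → ℝ) (x : Fin n × Fin n → ℝ) : Prop :=
  (∀ e ∈ E, b e ≤ x e ∧ x e ≤ c e) ∧
  (∀ i : Fin n,
    (∑ e ∈ E.filter (fun e => e.1 = i), x e)
      - (∑ e ∈ E.filter (fun e => e.2 = i), x e) = s i)

/-- `β(p) = min over feasible flows x of D(p,x)`. -/
noncomputable def betaVal (n : ℕ) (E : Finset (Fin n × Fin n)) (a b c : Fin n × Fin n → ℝ)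
    (s : Fin n → ℝ) (p : Fin n → ℝ) : ℝ :=
  sInf {r : ℝ | ∃ x, FeasibleFlow n E b c s x ∧ r = Dval n E a b c p x}

/-!
Along a path that is unblocked for `x*`, complementary slackness makes `p*` drop by at most the
path's cost, so `d_H(p*) = 0`. Replacing `p*` by `p̂` moves each endpoint potential by at most
`‖p̂ − p*‖_∞`, hence `D(p̂, x*) ≤ 2‖p̂ − p*‖_∞`, and `x*` is among the flows over which `β`
minimizes.
-/

theorem Fin.sum_castSucc_sub_succ {M : Type*} [AddCommGroup M] {m : ℕ} (g : Fin (m + 1) → M) :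
    ∑ i : Fin m, (g i.castSucc - g i.succ) = g 0 - g (Fin.last m) := by
  rw [sum_sub_distrib, sub_eq_sub_iff_add_eq_add]
  exact (Fin.sum_univ_castSucc g).symm.trans (Fin.sum_univ_succ g)

def ComplementarySlackness {n : ℕ} (E : Finset (Fin n × Fin n)) (a b c : Fin n × Fin n → ℝ)
    (x : Fin n × Fin n → ℝ) (p : Fin n → ℝ) : Prop :=
  ∀ e ∈ E, (x e < c e → p e.1 - p e.2 - a e ≤ 0) ∧ (b e < x e → 0 ≤ p e.1 - p e.2 - a e)

namespace MCFPath

variable {n : ℕ} {E : Finset (Fin n × Fin n)} {a b c x : Fin n × Fin n → ℝ} {p : Fin n → ℝ}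

theorem step_sub_le_of_complementarySlackness (hcs : ComplementarySlackness E a b c x p)
    (H : MCFPath n E) (hH : H.Unblocked x b c) (i : Fin H.len) :
    p (H.node i.castSucc) - p (H.node i.succ)
      ≤ (if H.dir i then a (H.edge i) else 0) - (if H.dir i then 0 else a (H.edge i)) := by
  have hmem := H.mem i
  have hfree := hH i
  cases hd : H.dir i <;>
    simp only [edge, hd, if_true, if_false, Bool.false_eq_true] at hmem hfree ⊢
  · linarith [(hcs _ hmem).2 hfree]
  · linarith [(hcs _ hmem).1 hfree]

theorem src_sub_tgt_le_of_complementarySlackness (hcs : ComplementarySlackness E a b c x p)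
    (H : MCFPath n E) (hH : H.Unblocked x b c) :
    p H.src - p H.tgt ≤
      (∑ i, if H.dir i then a (H.edge i) else 0) - (∑ i, if H.dir i then 0 else a (H.edge i)) := by
  rw [← sum_sub_distrib, src, tgt, ← Fin.sum_castSucc_sub_succ (fun j ↦ p (H.node j))]
  exact sum_le_sum fun i _ ↦ step_sub_le_of_complementarySlackness hcs H hH i

theorem dH_le_two_mul_of_complementarySlackness (hcs : ComplementarySlackness E a b c x p)
    (H : MCFPath n E) (hH : H.Unblocked x b c) {q : Fin n → ℝ} {M : ℝ}
    (hM : ∀ i, |q i - p i| ≤ M) :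
    H.dH a q ≤ 2 * M := by
  have hsrc := (abs_le.mp (hM H.src)).2
  have htgt := (abs_le.mp (hM H.tgt)).1
  have hM₀ : 0 ≤ M := (abs_nonneg _).trans (hM H.src)
  have hdrop := src_sub_tgt_le_of_complementarySlackness hcs H hH
  exact max_le (by linarith) (by linarith)

end MCFPath

theorem Dval_nonneg {n : ℕ} (E : Finset (Fin n × Fin n)) (a b c : Fin n × Fin n → ℝ)
    (p : Fin n → ℝ) (x : Fin n × Fin n → ℝ) : 0 ≤ Dval n E a b c p x :=
  Real.sSup_nonneg fun _ ↦ by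
    rintro (rfl | ⟨H, -, -, rfl⟩)
    exacts [le_rfl, le_max_left _ _]

theorem Dval_le {n : ℕ} {E : Finset (Fin n × Fin n)} {a b c : Fin n × Fin n → ℝ}
    {p : Fin n → ℝ} {x : Fin n × Fin n → ℝ} {r : ℝ} (hr : 0 ≤ r)
    (hpath : ∀ H : MCFPath n E, H.Simple → H.Unblocked x b c → H.dH a p ≤ r) :
    Dval n E a b c p x ≤ r :=
  Real.sSup_le (by rintro _ (rfl | ⟨H, hs, hu, rfl⟩); exacts [hr, hpath H hs hu]) hr

theorem betaVal_le_Dval {n : ℕ} {E : Finset (Fin n × Fin n)} {a b c : Fin n × Fin n → ℝ}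
    {s : Fin n → ℝ} (p : Fin n → ℝ) {x : Fin n × Fin n → ℝ} (hx : FeasibleFlow n E b c s x) :
    betaVal n E a b c s p ≤ Dval n E a b c p x :=
  csInf_le ⟨0, by rintro _ ⟨y, -, rfl⟩; exact Dval_nonneg E a b c p y⟩ ⟨x, hx, rfl⟩

/-- `β(p̂) ≤ 2‖p̂ − p*‖_∞` for any optimal primal-dual pair `(x*, p*)`
satisfying complementary slackness. -/
theorem beta_le_two_linf (n : ℕ) (hn : 0 < n) (E : Finset (Fin n × Fin n))
    (a b c : Fin n × Fin n → ℝ) (s : Fin n → ℝ)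
    (xstar : Fin n × Fin n → ℝ) (pstar phat : Fin n → ℝ)
    (hfeas : FeasibleFlow n E b c s xstar)
    (hcs : ∀ e ∈ E, (xstar e < c e → pstar e.1 - pstar e.2 - a e ≤ 0) ∧
                    (b e < xstar e → 0 ≤ pstar e.1 - pstar e.2 - a e)) :
    betaVal n E a b c s phat
      ≤ 2 * Finset.univ.sup' ⟨⟨0, hn⟩, Finset.mem_univ _⟩
          (fun i => |phat i - pstar i|) := by
  set M := Finset.univ.sup' ⟨⟨0, hn⟩, Finset.mem_univ _⟩ (fun i => |phat i - pstar i|)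
  have hM : ∀ i, |phat i - pstar i| ≤ M :=
    fun i ↦ le_sup' (fun i ↦ |phat i - pstar i|) (mem_univ i)
  have hM₀ : 0 ≤ M := (abs_nonneg _).trans (hM ⟨0, hn⟩)
  calc betaVal n E a b c s phat ≤ Dval n E a b c phat xstar := betaVal_le_Dval phat hfeas
    _ ≤ 2 * M := Dval_le (by linarith) fun H _ hH ↦
      H.dH_le_two_mul_of_complementarySlackness hcs hH hM
end

section
/- There exists an optimal dual solution p* of the minimum-cost flow problem satisfying 0 ≤ p*_i ≤ (n−1)·C for all nodes i, where C = max_{(i,j)∈E} |a_{ij}| and n is the number of nodes. -/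
/-!
Along a direction `d` that changes `p_i - p_j` only on edges where `|p_i - p_j|` exceeds `C`,
hence stays away from the kink of the edge term at `a_{ij}`, the dual objective is affine near
`p`; at a maximizer its slope must vanish, so moving along `d` keeps `p` optimal. Starting from a
nonnegative optimal `p`, repeatedly pick the lowest value `τ` lying more than `C` above every
smaller value (and above `0`) and lower all values `≥ τ` until that gap has size `C` (or `τ`
reaches `0`).
Each such move leaves the set of these "gap tops" strictly smaller, so the process ends at an
optimal `p ≥ 0` in which every positive value is within `C` of a smaller one; then a value with
`k` smaller values is at most `k * C ≤ (n - 1) * C`.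
-/

open Finset

noncomputable section

namespace MinCostFlowDual

def edgeTerm (a b c t : ℝ) : ℝ :=
  if 0 ≤ a - t then (a - t) * b else (a - t) * c

lemma edgeTerm_of_le {a b c t : ℝ} (h : t ≤ a) : edgeTerm a b c t = (a - t) * b :=
  if_pos (sub_nonneg.mpr h)

lemma edgeTerm_of_ge {a b c t : ℝ} (h : a ≤ t) : edgeTerm a b c t = (a - t) * c := by
  unfold edgeTerm
  split_ifs with h'
  · rw [show a - t = 0 by linarith, zero_mul, zero_mul]
  · rfl

lemma edgeTerm_add {a b c t u C Δ : ℝ} (ha : |a| ≤ C) (ht : C + Δ ≤ |t|) (hu : |u| ≤ Δ) :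
    edgeTerm a b c (t + u) = edgeTerm a b c t - u * (if 0 ≤ t then c else b) := by
  obtain ⟨ha₁, ha₂⟩ := abs_le.mp ha
  obtain ⟨hu₁, hu₂⟩ := abs_le.mp hu
  split_ifs with h
  · rw [abs_of_nonneg h] at ht
    rw [edgeTerm_of_ge (by linarith), edgeTerm_of_ge (by linarith)]
    ring
  · rw [abs_of_neg (not_le.mp h)] at ht
    rw [edgeTerm_of_le (by linarith), edgeTerm_of_le (by linarith)]
    ring

variable {ι : Type*}

def lowerFrom (τ m : ℝ) (p : ι → ℝ) : ι → ℝ :=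
  fun i => if τ ≤ p i then p i - (τ - m) else p i

variable {τ m : ℝ} {p : ι → ℝ}

lemma lowerFrom_eq_add_smul :
    lowerFrom τ m p = p + (-(τ - m)) • fun i => if τ ≤ p i then (1 : ℝ) else 0 := by
  funext i
  simp only [lowerFrom, Pi.add_apply, Pi.smul_apply, smul_eq_mul]
  split_ifs <;> ring

lemma lowerFrom_nonneg (hp : 0 ≤ p) (hm : 0 ≤ m) : 0 ≤ lowerFrom τ m p := by
  intro i
  unfold lowerFrom
  split_ifs with h
  · simp only [Pi.zero_apply]
    linarith
  · exact hp i

variable [Fintype ι]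

def dualObj (E : Finset (ι × ι)) (a b c : ι × ι → ℝ) (s : ι → ℝ) (p : ι → ℝ) : ℝ :=
  ∑ e ∈ E, edgeTerm (a e) (b e) (c e) (p e.1 - p e.2) + ∑ i, s i * p i

variable {E : Finset (ι × ι)} {a b c : ι × ι → ℝ} {s : ι → ℝ} {C : ℝ}

lemma dualObj_add_smul {Δ : ℝ} {d : ι → ℝ} (hC : ∀ e ∈ E, |a e| ≤ C)
    (hd : ∀ e ∈ E, d e.1 ≠ d e.2 → C + Δ * |d e.1 - d e.2| ≤ |p e.1 - p e.2|) :
    ∃ K, ∀ δ, |δ| ≤ Δ → dualObj E a b c s (p + δ • d) = dualObj E a b c s p + δ * K := by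
  refine ⟨∑ i, s i * d i -
    ∑ e ∈ E, (d e.1 - d e.2) * (if 0 ≤ p e.1 - p e.2 then c e else b e), fun δ hδ => ?_⟩
  have hedge : ∀ e ∈ E,
      edgeTerm (a e) (b e) (c e) ((p + δ • d) e.1 - (p + δ • d) e.2) =
        edgeTerm (a e) (b e) (c e) (p e.1 - p e.2) -
          δ * ((d e.1 - d e.2) * (if 0 ≤ p e.1 - p e.2 then c e else b e)) := by
    intro e he
    rw [show (p + δ • d) e.1 - (p + δ • d) e.2 = (p e.1 - p e.2) + δ * (d e.1 - d e.2) by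
      simp only [Pi.add_apply, Pi.smul_apply, smul_eq_mul]; ring]
    by_cases hde : d e.1 = d e.2
    · simp [hde]
    · rw [edgeTerm_add (hC e he) (hd e he hde) (by rw [abs_mul]; gcongr)]
      ring
  have hsupply : ∑ i, s i * (p + δ • d) i = ∑ i, s i * p i + δ * ∑ i, s i * d i := by
    simp only [Pi.add_apply, Pi.smul_apply, smul_eq_mul, mul_add, sum_add_distrib, mul_sum,
      mul_left_comm δ]
  rw [dualObj, dualObj, sum_congr rfl hedge, sum_sub_distrib, ← mul_sum, hsupply]
  ring

variable (E a b c s) in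
def IsOptimal (p : ι → ℝ) : Prop :=
  ∀ q, dualObj E a b c s q ≤ dualObj E a b c s p

lemma IsOptimal.add_smul {Δ δ : ℝ} {d : ι → ℝ} (hp : IsOptimal E a b c s p)
    (hC : ∀ e ∈ E, |a e| ≤ C)
    (hd : ∀ e ∈ E, d e.1 ≠ d e.2 → C + Δ * |d e.1 - d e.2| ≤ |p e.1 - p e.2|)
    (hΔ : 0 < Δ) (hδ : |δ| ≤ Δ) :
    IsOptimal E a b c s (p + δ • d) := by
  obtain ⟨K, hK⟩ := dualObj_add_smul (s := s) (b := b) (c := c) hC hd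
  have hup := hp (p + Δ • d)
  have hdown := hp (p + (-Δ) • d)
  rw [hK Δ (abs_of_pos hΔ).le] at hup
  rw [hK (-Δ) (by rw [abs_neg, abs_of_pos hΔ])] at hdown
  have hK0 : K = 0 := (mul_eq_zero.mp (by linarith : Δ * K = 0)).resolve_left hΔ.ne'
  intro q
  rw [hK δ hδ, hK0, mul_zero, add_zero]
  exact hp q

lemma IsOptimal.exists_nonneg (hp : IsOptimal E a b c s p)
    (hC : ∀ e ∈ E, |a e| ≤ C) : ∃ q, 0 ≤ q ∧ IsOptimal E a b c s q := by
  set δ := ∑ i, |p i|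
  refine ⟨p + δ • 1, fun i => ?_, hp.add_smul (d := 1) (Δ := |δ| + 1) hC
    (fun e _ h => (h rfl).elim) (by positivity) (by linarith)⟩
  have : |p i| ≤ δ := single_le_sum (fun j _ => abs_nonneg (p j)) (mem_univ i)
  simp only [Pi.zero_apply, Pi.add_apply, Pi.smul_apply, Pi.one_apply, smul_eq_mul, mul_one]
  linarith [neg_abs_le (p i)]

def gapTops (C : ℝ) (p : ι → ℝ) : Finset ι :=
  {i | 0 < p i ∧ ∀ j, p j < p i → p j + C < p i}

lemma mem_gapTops {i : ι} :
    i ∈ gapTops C p ↔ 0 < p i ∧ ∀ j, p j < p i → p j + C < p i := by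
  simp [gapTops]

lemma le_card_mul_of_gapTops_eq_empty (hC0 : 0 ≤ C) (hgap : gapTops C p = ∅)
    (i : ι) : p i ≤ #{j | p j < p i} * C := by
  by_cases hi : 0 < p i
  · obtain ⟨j, hji, hij⟩ : ∃ j, p j < p i ∧ p i ≤ p j + C := by
      have : i ∉ gapTops C p := by simp [hgap]
      simpa [mem_gapTops, hi] using this
    have hcard : #{k | p k < p j} < #{k | p k < p i} := by
      refine card_lt_card ((ssubset_iff_of_subset fun k hk => ?_).mpr ⟨j, ?_, ?_⟩)
      · simp only [mem_filter, mem_univ, true_and] at hk ⊢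
        exact hk.trans hji
      · simpa using hji
      · simp
    have hj := le_card_mul_of_gapTops_eq_empty hC0 hgap j
    calc p i ≤ p j + C := hij
      _ ≤ (#{k | p k < p j} + 1 : ℕ) * C := by push_cast; linarith
      _ ≤ #{k | p k < p i} * C := by gcongr; exact hcard
  · exact (not_lt.mp hi).trans (by positivity)
termination_by #{j | p j < p i}

lemma le_mul_of_gapTops_eq_empty (hC0 : 0 ≤ C) (hgap : gapTops C p = ∅)
    (i : ι) : p i ≤ (Fintype.card ι - 1 : ℕ) * C := by
  have hcard : #{j | p j < p i} ≤ Fintype.card ι - 1 := by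
    have := card_lt_card (filter_ssubset.mpr ⟨i, mem_univ i, lt_irrefl (p i)⟩ :
      ({j | p j < p i} : Finset ι) ⊂ univ)
    rw [card_univ] at this
    omega
  calc p i ≤ #{j | p j < p i} * C := le_card_mul_of_gapTops_eq_empty hC0 hgap i
    _ ≤ (Fintype.card ι - 1 : ℕ) * C := by gcongr

lemma isOptimal_lowerFrom (hp : IsOptimal E a b c s p) (hC : ∀ e ∈ E, |a e| ≤ C)
    (hmτ : m < τ) (hbelow : ∀ j, p j < τ → p j + C ≤ m) :
    IsOptimal E a b c s (lowerFrom τ m p) := by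
  rw [lowerFrom_eq_add_smul]
  refine hp.add_smul hC (Δ := τ - m) (fun e _ hne => ?_) (sub_pos.mpr hmτ)
    (by rw [abs_neg, abs_of_pos (sub_pos.mpr hmτ)])
  split_ifs at hne ⊢ with h₁ h₂ h₂
  · exact absurd rfl hne
  · have := hbelow _ (not_le.mp h₂)
    rw [sub_zero, abs_one, mul_one]
    exact le_abs.mpr (Or.inl (by linarith))
  · have := hbelow _ (not_le.mp h₁)
    rw [zero_sub, abs_neg, abs_one, mul_one]
    exact le_abs.mpr (Or.inr (by linarith))
  · exact absurd rfl hne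

lemma gapTops_lowerFrom_subset (hmτ : m < τ) (hbelow : ∀ j, p j < τ → p j + C ≤ m) :
    gapTops C (lowerFrom τ m p) ⊆ gapTops C p := by
  intro i hi
  rw [mem_gapTops] at hi ⊢
  simp only [lowerFrom] at hi
  obtain ⟨hpos, hgap⟩ := hi
  by_cases hiτ : τ ≤ p i
  · rw [if_pos hiτ] at hpos hgap
    refine ⟨by linarith, fun j hj => ?_⟩
    by_cases hjτ : τ ≤ p j
    · have := hgap j (by rw [if_pos hjτ]; linarith)
      rw [if_pos hjτ] at this
      linarith
    · linarith [hbelow j (not_le.mp hjτ)]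
  · rw [if_neg hiτ] at hpos hgap
    refine ⟨hpos, fun j hj => ?_⟩
    have hjτ : ¬τ ≤ p j := by linarith
    simpa only [if_neg hjτ] using hgap j (by rwa [if_neg hjτ])

lemma notMem_gapTops_lowerFrom {i : ι} (hi : p i = τ) (hmτ : m < τ)
    (hm : 0 < m → ∃ j, p j < m ∧ m ≤ p j + C) : i ∉ gapTops C (lowerFrom τ m p) := by
  intro hmem
  rw [mem_gapTops] at hmem
  simp only [lowerFrom, hi, le_refl, if_true, sub_sub_cancel] at hmem
  obtain ⟨j, hjm, hmj⟩ := hm hmem.1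
  have hjτ : ¬τ ≤ p j := by linarith
  have := hmem.2 j (by rwa [if_neg hjτ])
  rw [if_neg hjτ] at this
  linarith

lemma exists_floor_of_isMin_gapTops (hC0 : 0 ≤ C) (hp : 0 ≤ p) {i : ι} (hi : i ∈ gapTops C p)
    (hmin : ∀ k ∈ gapTops C p, p i ≤ p k) :
    ∃ m, 0 ≤ m ∧ m < p i ∧ (∀ j, p j < p i → p j + C ≤ m) ∧
      (0 < m → ∃ j, p j < m ∧ m ≤ p j + C) := by
  obtain ⟨hpos, hgap⟩ := mem_gapTops.mp hi
  by_cases hlow : ∃ j, p j < p i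
  · obtain ⟨j₀, hj₀⟩ := hlow
    obtain ⟨j, hj, hjmax⟩ :=
      exists_max_image ({j | p j < p i} : Finset ι) p ⟨j₀, by simpa using hj₀⟩
    simp only [mem_filter, mem_univ, true_and] at hj hjmax
    refine ⟨p j + C, by linarith [show 0 ≤ p j from hp j], hgap j hj,
      fun k hk => by linarith [hjmax k hk], fun hm => ⟨j, ?_, le_rfl⟩⟩
    -- `C > 0` here: otherwise the positive value `p j` would be a lower gap top than `p i`.
    by_contra hC
    have hj_top : j ∈ gapTops C p := mem_gapTops.mpr ⟨by linarith, fun k hk => by linarith⟩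
    linarith [hmin j hj_top]
  · simp only [not_exists, not_lt] at hlow
    exact ⟨0, le_rfl, hpos, fun j hj => absurd hj (not_lt.mpr (hlow j)),
      fun h => absurd h (lt_irrefl 0)⟩

lemma IsOptimal.exists_card_gapTops_lt (hp : IsOptimal E a b c s p) (hC : ∀ e ∈ E, |a e| ≤ C)
    (hC0 : 0 ≤ C) (hp0 : 0 ≤ p) (hne : (gapTops C p).Nonempty) :
    ∃ q, 0 ≤ q ∧ IsOptimal E a b c s q ∧ #(gapTops C q) < #(gapTops C p) := by
  obtain ⟨i, hi, hmin⟩ := exists_min_image (gapTops C p) p hne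
  obtain ⟨m, hm0, hmτ, hbelow, hattained⟩ := exists_floor_of_isMin_gapTops hC0 hp0 hi hmin
  refine ⟨lowerFrom (p i) m p, lowerFrom_nonneg hp0 hm0, isOptimal_lowerFrom hp hC hmτ hbelow,
    card_lt_card ?_⟩
  exact (ssubset_iff_of_subset (gapTops_lowerFrom_subset hmτ hbelow)).mpr
    ⟨i, hi, notMem_gapTops_lowerFrom rfl hmτ hattained⟩

theorem IsOptimal.exists_gapTops_eq_empty {p : ι → ℝ} (hp : IsOptimal E a b c s p)
    (hC : ∀ e ∈ E, |a e| ≤ C) (hC0 : 0 ≤ C) (hp0 : 0 ≤ p) :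
    ∃ q, 0 ≤ q ∧ IsOptimal E a b c s q ∧ gapTops C q = ∅ := by
  obtain hempty | hne := (gapTops C p).eq_empty_or_nonempty
  · exact ⟨p, hp0, hp, hempty⟩
  · obtain ⟨q, hq0, hq, _⟩ := hp.exists_card_gapTops_lt hC hC0 hp0 hne
    exact hq.exists_gapTops_eq_empty hC hC0 hq0
termination_by #(gapTops C p)

end MinCostFlowDual

open MinCostFlowDual in
theorem exists_bounded_optimal_dual_general (n : ℕ)
    (E : Finset (Fin n × Fin n))
    (a b c : Fin n × Fin n → ℝ) (s : Fin n → ℝ) (C : ℝ)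
    (hC : ∀ e ∈ E, |a e| ≤ C) (hC0 : 0 ≤ C)
    (obj : (Fin n → ℝ) → ℝ)
    (hobj : ∀ p, obj p =
      (∑ e ∈ E, if 0 ≤ a e - (p e.1 - p e.2)
        then (a e - (p e.1 - p e.2)) * b e
        else (a e - (p e.1 - p e.2)) * c e) + ∑ i, s i * p i)
    (p0 : Fin n → ℝ) (hopt : ∀ p, obj p ≤ obj p0) :
    ∃ pstar : Fin n → ℝ,
      (∀ i, 0 ≤ pstar i ∧ pstar i ≤ (n - 1 : ℕ) * C) ∧
      (∀ p, obj p ≤ obj pstar) := by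
  obtain rfl : obj = dualObj E a b c s := funext hobj
  obtain ⟨p1, hp1_nonneg, hp1⟩ := (show IsOptimal E a b c s p0 from hopt).exists_nonneg hC
  obtain ⟨pstar, hnonneg, hpstar, hgap⟩ := hp1.exists_gapTops_eq_empty hC hC0 hp1_nonneg
  refine ⟨pstar, fun i => ⟨hnonneg i, ?_⟩, hpstar⟩
  simpa using le_mul_of_gapTops_eq_empty hC0 hgap i

/-- There exists an optimal dual solution `pstar` of the minimum-cost flow dual
satisfying `0 ≤ pstar i ≤ (n−1)·C` for all nodes `i`. -/
theorem exists_bounded_optimal_dual (n : ℕ) (hn : 0 < n)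
    (E : Finset (Fin n × Fin n))
    (a b c : Fin n × Fin n → ℝ) (s : Fin n → ℝ) (C : ℝ)
    (hC : ∀ e ∈ E, |a e| ≤ C) (hC0 : 0 ≤ C)
    (hconn : (SimpleGraph.fromRel (fun u v : Fin n => (u, v) ∈ E)).Connected)
    (obj : (Fin n → ℝ) → ℝ)
    (hobj : ∀ p, obj p =
      (∑ e ∈ E, if 0 ≤ a e - (p e.1 - p e.2)
        then (a e - (p e.1 - p e.2)) * b e
        else (a e - (p e.1 - p e.2)) * c e) + ∑ i, s i * p i)
    (p0 : Fin n → ℝ) (hopt : ∀ p, obj p ≤ obj p0) :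
    ∃ pstar : Fin n → ℝ,
      (∀ i, 0 ≤ pstar i ∧ pstar i ≤ (n - 1 : ℕ) * C) ∧
      (∀ p, obj p ≤ obj pstar) :=
  exists_bounded_optimal_dual_general n E a b c s C hC hC0 obj hobj p0 hopt
end
end

section
/- Let p satisfy ε-complementary slackness with respect to edge costs a (i.e., for each edge, the associated reduced cost conditions hold within tolerance ε = 1 for some feasible flow). If p' = c·p and new costs a' satisfy a' − c ≤ c·a ≤ a' + c componentwise, then p' satisfies 2c-complementary slackness with respect to a': every edge's reduced cost violation under (p', a') is at most 2c. -/
open Finset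

/-- If `p` satisfies 1-complementary-slackness w.r.t. costs `a` and a flow `x`,
`p' = c·p`, and the scaled costs `a'` satisfy `a' − c ≤ c·a ≤ a' + c`
componentwise, then `p'` satisfies `2c`-complementary-slackness w.r.t. `a'`. -/
theorem scaled_dual_two_c_CS (n : ℕ) (E : Finset (Fin n × Fin n))
    (a a' b cap x : Fin n × Fin n → ℝ) (p : Fin n → ℝ) (c : ℝ) (hc : 2 ≤ c)
    (hcs : ∀ e ∈ E, (x e < cap e → p e.1 - p e.2 - a e ≤ 1) ∧
                    (b e < x e → -1 ≤ p e.1 - p e.2 - a e))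
    (ha' : ∀ e ∈ E, a' e - c ≤ c * a e ∧ c * a e ≤ a' e + c) :
    ∀ e ∈ E, (x e < cap e → c * p e.1 - c * p e.2 - a' e ≤ 2 * c) ∧
             (b e < x e → -(2 * c) ≤ c * p e.1 - c * p e.2 - a' e) := by
  intro e he
  obtain ⟨h1, h2⟩ := hcs e he
  obtain ⟨h3, h4⟩ := ha' e he
  constructor
  · intro hx
    nlinarith [h1 hx]
  · intro hx
    nlinarith [h2 hx]
end

section
/- In the ε-relaxation algorithm, a flow push along edge (v_i,v_j) performed only when p_i − p_j − a_{ij} = ε (for a forward push increasing x_{ij}) or p_i − p_j − a_{ij} = −ε (for a backward push decreasing x_{ij}) preserves the ε-complementary slackness condition of the pair (x, p). -/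
open Finset

/-- A flow push along edge `e0`, performed only when the reduced cost of `e0`
equals `ε` (forward push) or `−ε` (backward push), preserves
ε-complementary-slackness of the pair `(x, p)`. -/
theorem push_preserves_epsCS (n : ℕ) (E : Finset (Fin n × Fin n))
    (a b cap x : Fin n × Fin n → ℝ) (p : Fin n → ℝ) (ε δ : ℝ)
    (hε : 0 ≤ ε) (hδ : 0 ≤ δ) (e0 : Fin n × Fin n) (he0 : e0 ∈ E)
    (hcs : ∀ e ∈ E, (x e < cap e → p e.1 - p e.2 - a e ≤ ε) ∧
                    (b e < x e → -ε ≤ p e.1 - p e.2 - a e))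
    (x' : Fin n × Fin n → ℝ)
    (hpush :
      (p e0.1 - p e0.2 - a e0 = ε ∧ δ ≤ cap e0 - x e0 ∧
        x' = Function.update x e0 (x e0 + δ)) ∨
      (p e0.1 - p e0.2 - a e0 = -ε ∧ δ ≤ x e0 - b e0 ∧
        x' = Function.update x e0 (x e0 - δ))) :
    ∀ e ∈ E, (x' e < cap e → p e.1 - p e.2 - a e ≤ ε) ∧
             (b e < x' e → -ε ≤ p e.1 - p e.2 - a e) := by
  intro e he
  rcases hpush with ⟨hrc, hcap, hx'⟩ | ⟨hrc, hlow, hx'⟩ <;> subst hx' <;>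
    by_cases h : e = e0
  · subst h
    simp only [Function.update_self]
    exact ⟨fun _ => hrc.le, fun _ => by rw [hrc]; linarith⟩
  · simpa [Function.update_of_ne h] using hcs e he
  · subst h
    simp only [Function.update_self]
    exact ⟨fun _ => by rw [hrc]; linarith, fun _ => hrc.ge⟩
  · simpa [Function.update_of_ne h] using hcs e he
end
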